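/- arXiv:math/0510040 — 4 statements merged into one kernel-verified Lean document; each statement's English description precedes it below -/
import Mathlib

section
/- Let H be a bialgebra over a field k and σ : H ⊗ H → k a linear map. Define a product on H by h ·_σ h' = σ(h₁,h'₁) h₂ h'₂. Then ·_σ is associative if and only if σ is a left 2-cocycle, i.e. σ(a₁,b₁)σ(a₂b₂,c) = σ(b₁,c₁)σ(a,b₂c₂) for all a,b,c ∈ H. -/
open TensorProduct

noncomputable section

universe u

section Defs

variable {k : Type u} [CommRing k] {H : Type u} [Ring H] [Bialgebra k H]

/-- Convolution product on the dual of a coalgebra. -/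
def conv {C : Type u} [AddCommGroup C] [Module k C] [Coalgebra k C]
    (f g : C →ₗ[k] k) : C →ₗ[k] k :=
  LinearMap.mul' k k ∘ₗ TensorProduct.map f g ∘ₗ Coalgebra.comul

/-- `a ⊗ b ↦ a · ε(b)`. -/
def pr1 : H ⊗[k] H →ₗ[k] H :=
  (TensorProduct.rid k H).toLinearMap ∘ₗ TensorProduct.map LinearMap.id Coalgebra.counit

/-- `a ⊗ (b ⊗ c) ↦ ε(a) · (b ⊗ c)`. -/
def dropL3 : H ⊗[k] (H ⊗[k] H) →ₗ[k] H ⊗[k] H :=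
  (TensorProduct.lid k (H ⊗[k] H)).toLinearMap ∘ₗ TensorProduct.map Coalgebra.counit LinearMap.id

/-- Multiplication of `H` as a linear map `H ⊗ H → H`. -/
def mulH : H ⊗[k] H →ₗ[k] H := LinearMap.mul' k H

/-- `σ` is normalized: `σ(1,h) = ε(h) = σ(h,1)`. -/
def Normalized (σ : H ⊗[k] H →ₗ[k] k) : Prop :=
  ∀ h : H, σ (1 ⊗ₜ[k] h) = Coalgebra.counit (R := k) h ∧
    σ (h ⊗ₜ[k] 1) = Coalgebra.counit (R := k) h

/-- Left 2-cocycle condition: `σ(a₁,b₁)σ(a₂b₂,c) = σ(b₁,c₁)σ(a,b₂c₂)`, expressed as an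
equality of linear functionals on `H ⊗ (H ⊗ H)` (convolution of the indicated factors). -/
def IsLeftCocycle (σ : H ⊗[k] H →ₗ[k] k) : Prop :=
  conv (σ ∘ₗ TensorProduct.map LinearMap.id pr1)
      (σ ∘ₗ TensorProduct.map mulH LinearMap.id ∘ₗ (TensorProduct.assoc k H H H).symm.toLinearMap)
  = conv (σ ∘ₗ dropL3) (σ ∘ₗ TensorProduct.map LinearMap.id mulH)

/-- Right 2-cocycle condition: `σ(a₁b₁,c)σ(a₂,b₂) = σ(a,b₁c₁)σ(b₂,c₂)`. -/
def IsRightCocycle (σ : H ⊗[k] H →ₗ[k] k) : Prop :=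
  conv (σ ∘ₗ TensorProduct.map mulH LinearMap.id ∘ₗ (TensorProduct.assoc k H H H).symm.toLinearMap)
      (σ ∘ₗ TensorProduct.map LinearMap.id pr1)
  = conv (σ ∘ₗ TensorProduct.map LinearMap.id mulH) (σ ∘ₗ dropL3)

/-- Laziness for `σ : H ⊗ H → k`: `σ(h₁,h'₁)h₂h'₂ = h₁h'₁σ(h₂,h'₂)`. -/
def IsLazy2 (σ : H ⊗[k] H →ₗ[k] k) : Prop :=
  (TensorProduct.lid k H).toLinearMap ∘ₗ TensorProduct.map σ mulH ∘ₗ Coalgebra.comul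
  = (TensorProduct.rid k H).toLinearMap ∘ₗ TensorProduct.map mulH σ ∘ₗ Coalgebra.comul

/-- Laziness for `γ : H → k`: `γ(h₁)h₂ = h₁γ(h₂)`. -/
def IsLazy1 (γ : H →ₗ[k] k) : Prop :=
  (TensorProduct.lid k H).toLinearMap ∘ₗ TensorProduct.map γ LinearMap.id ∘ₗ Coalgebra.comul
  = (TensorProduct.rid k H).toLinearMap ∘ₗ TensorProduct.map LinearMap.id γ ∘ₗ Coalgebra.comul

/-- Neatness: `σ(a,b₁)σ(b₂,c) = σ(b₁,c)σ(a,b₂)`. -/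
def Neat2 (σ : H ⊗[k] H →ₗ[k] k) : Prop :=
  conv (σ ∘ₗ TensorProduct.map LinearMap.id pr1) (σ ∘ₗ dropL3)
  = conv (σ ∘ₗ dropL3) (σ ∘ₗ TensorProduct.map LinearMap.id pr1)

/-- `a ⊗ (b ⊗ (c ⊗ d)) ↦ ε(a) (b ⊗ (c ⊗ d))`. -/
def dropL4 : H ⊗[k] (H ⊗[k] (H ⊗[k] H)) →ₗ[k] H ⊗[k] (H ⊗[k] H) :=
  (TensorProduct.lid k (H ⊗[k] (H ⊗[k] H))).toLinearMap ∘ₗ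
    TensorProduct.map Coalgebra.counit LinearMap.id

/-- `(a,b,c,d) ↦ σ(ab, c) ε(d)`. -/
def fPure (σ : H ⊗[k] H →ₗ[k] k) : H ⊗[k] (H ⊗[k] (H ⊗[k] H)) →ₗ[k] k :=
  σ ∘ₗ TensorProduct.map mulH LinearMap.id ∘ₗ (TensorProduct.assoc k H H H).symm.toLinearMap ∘ₗ
    TensorProduct.map LinearMap.id (TensorProduct.map LinearMap.id pr1)

/-- `(a,b,c,d) ↦ ε(a) τ(b, c) ε(d)`. -/
def gPure (τ : H ⊗[k] H →ₗ[k] k) : H ⊗[k] (H ⊗[k] (H ⊗[k] H)) →ₗ[k] k :=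
  τ ∘ₗ TensorProduct.map LinearMap.id pr1 ∘ₗ dropL4

/-- `(a,b,c,d) ↦ ε(a) σ(b, cd)`. -/
def hPure (σ : H ⊗[k] H →ₗ[k] k) : H ⊗[k] (H ⊗[k] (H ⊗[k] H)) →ₗ[k] k :=
  σ ∘ₗ TensorProduct.map LinearMap.id mulH ∘ₗ dropL4

/-- Purity for a map `σ` with convolution inverse `τ = σ⁻¹`:
`σ(ab₁,c₁)σ⁻¹(b₂,c₂)σ(b₃,c₃d) = σ(b₁,c₁d)σ⁻¹(b₂,c₂)σ(ab₃,c₃)`. -/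
def Pure2 (σ τ : H ⊗[k] H →ₗ[k] k) : Prop :=
  conv (C := H ⊗[k] (H ⊗[k] (H ⊗[k] H))) (conv (fPure σ) (gPure τ)) (hPure σ)
  = conv (C := H ⊗[k] (H ⊗[k] (H ⊗[k] H))) (conv (hPure σ) (gPure τ)) (fPure σ)

/-- `D¹(γ)(h,h') = γ(h₁)γ(h'₁)γinv(h₂h'₂)` where `γinv` is the convolution inverse of `γ`. -/
def D1 (γ γinv : H →ₗ[k] k) : H ⊗[k] H →ₗ[k] k :=
  conv (LinearMap.mul' k k ∘ₗ TensorProduct.map γ γ) (γinv ∘ₗ mulH)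

/-- The deformed product `h ·σ h' = σ(h₁,h'₁) h₂h'₂`. -/
def mulSig (σ : H ⊗[k] H →ₗ[k] k) : H ⊗[k] H →ₗ[k] H :=
  (TensorProduct.lid k H).toLinearMap ∘ₗ TensorProduct.map σ mulH ∘ₗ Coalgebra.comul

/-- Neatness for `γ : H → k`: `γ(ab₁)γ(b₂c) = γ(b₁c)γ(ab₂)`. -/
def Neat1 (γ : H →ₗ[k] k) : Prop :=
  conv (γ ∘ₗ mulH ∘ₗ TensorProduct.map LinearMap.id pr1) (γ ∘ₗ mulH ∘ₗ dropL3)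
  = conv (γ ∘ₗ mulH ∘ₗ dropL3) (γ ∘ₗ mulH ∘ₗ TensorProduct.map LinearMap.id pr1)

/-- `γ ∈ Reg¹(H)`: normalized and convolution invertible. -/
def Reg1 (γ : H →ₗ[k] k) : Prop :=
  γ 1 = 1 ∧ ∃ δ : H →ₗ[k] k, conv γ δ = (Coalgebra.counit : H →ₗ[k] k) ∧
    conv δ γ = (Coalgebra.counit : H →ₗ[k] k)

/-- `σ ∈ Reg²(H)`: normalized and convolution invertible. -/
def Reg2 (σ : H ⊗[k] H →ₗ[k] k) : Prop :=
  Normalized σ ∧ ∃ τ : H ⊗[k] H →ₗ[k] k,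
    conv σ τ = (Coalgebra.counit : H ⊗[k] H →ₗ[k] k) ∧
    conv τ σ = (Coalgebra.counit : H ⊗[k] H →ₗ[k] k)

/-- `a ⊗ b ↦ γ(a b₁) b₂`. -/
def stmt17L (γ : H →ₗ[k] k) : H ⊗[k] H →ₗ[k] H :=
  (TensorProduct.lid k H).toLinearMap ∘ₗ TensorProduct.map (γ ∘ₗ mulH) LinearMap.id ∘ₗ
    (TensorProduct.assoc k H H H).symm.toLinearMap ∘ₗ
      TensorProduct.map LinearMap.id Coalgebra.comul

/-- `a ⊗ b ↦ γ(a b₂) b₁`. -/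
def stmt17R (γ : H →ₗ[k] k) : H ⊗[k] H →ₗ[k] H :=
  (TensorProduct.lid k H).toLinearMap ∘ₗ TensorProduct.map (γ ∘ₗ mulH) LinearMap.id ∘ₗ
    (TensorProduct.assoc k H H H).symm.toLinearMap ∘ₗ
      TensorProduct.map LinearMap.id
        ((TensorProduct.comm k H H).toLinearMap ∘ₗ Coalgebra.comul)

end Defs

section Aux
set_option synthInstance.maxHeartbeats 1000000
set_option maxHeartbeats 1000000
variable {k : Type u} [CommRing k] {H : Type u} [Ring H] [Bialgebra k H]
open Coalgebra Finset
open scoped Coalgebra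

variable {M : Type u} [AddCommGroup M] [Module k M]


theorem sum_rot3 {α β γ : Type u} {N : Type u} [AddCommMonoid N]
    (A : Finset α) (B : Finset β) (C : Finset γ) (f : α → β → γ → N) :
    ∑ c ∈ C, ∑ b ∈ B, ∑ a ∈ A, f a b c = ∑ a ∈ A, ∑ b ∈ B, ∑ c ∈ C, f a b c :=
  calc ∑ c ∈ C, ∑ b ∈ B, ∑ a ∈ A, f a b c
      = ∑ b ∈ B, ∑ c ∈ C, ∑ a ∈ A, f a b c := Finset.sum_comm
    _ = ∑ b ∈ B, ∑ a ∈ A, ∑ c ∈ C, f a b c :=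
        Finset.sum_congr rfl fun _ _ => Finset.sum_comm
    _ = ∑ a ∈ A, ∑ b ∈ B, ∑ c ∈ C, f a b c := Finset.sum_comm

/-- move an independent sum past a dependent double sum -/
theorem sum_comm_dep {α β γ : Type u} {N : Type u} [AddCommMonoid N]
    (A : Finset α) (S : α → Finset β) (B : Finset γ) (f : α → β → γ → N) :
    ∑ a ∈ A, ∑ s ∈ S a, ∑ b ∈ B, f a s b = ∑ b ∈ B, ∑ a ∈ A, ∑ s ∈ S a, f a s b :=
  calc ∑ a ∈ A, ∑ s ∈ S a, ∑ b ∈ B, f a s b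
      = ∑ a ∈ A, ∑ b ∈ B, ∑ s ∈ S a, f a s b :=
        Finset.sum_congr rfl fun _ _ => Finset.sum_comm
    _ = ∑ b ∈ B, ∑ a ∈ A, ∑ s ∈ S a, f a s b := Finset.sum_comm

theorem comul_tmul_eval {x y : H} {ιx ιy : Type u} {Px : Finset ιx} {Py : Finset ιy}
    {u v : ιx → H} {s t : ιy → H}
    (hx : Coalgebra.comul (R := k) x = ∑ i ∈ Px, u i ⊗ₜ[k] v i)
    (hy : Coalgebra.comul (R := k) y = ∑ j ∈ Py, s j ⊗ₜ[k] t j) :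
    Coalgebra.comul (R := k) (x ⊗ₜ[k] y) =
      ∑ i ∈ Px, ∑ j ∈ Py, (u i ⊗ₜ[k] s j) ⊗ₜ[k] (v i ⊗ₜ[k] t j) := by
  have h0 : (Coalgebra.comul (R := k) (A := H ⊗[k] H)) =
      (TensorProduct.tensorTensorTensorComm k H H H H).toLinearMap ∘ₗ
        TensorProduct.map Coalgebra.comul Coalgebra.comul := rfl
  rw [h0]
  simp only [LinearMap.coe_comp, Function.comp_apply, TensorProduct.map_tmul, hx, hy,
    TensorProduct.sum_tmul, TensorProduct.tmul_sum, map_sum,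
    TensorProduct.tensorTensorTensorComm_tmul, LinearEquiv.coe_coe]
  rw [Finset.sum_comm]

theorem mulSig_eval (σ : H ⊗[k] H →ₗ[k] k) {x y : H}
    {ιx ιy : Type u} {Px : Finset ιx} {Py : Finset ιy}
    {u v : ιx → H} {s t : ιy → H}
    (hx : Coalgebra.comul (R := k) x = ∑ i ∈ Px, u i ⊗ₜ[k] v i)
    (hy : Coalgebra.comul (R := k) y = ∑ j ∈ Py, s j ⊗ₜ[k] t j) :
    mulSig σ (x ⊗ₜ[k] y) = ∑ i ∈ Px, ∑ j ∈ Py, σ (u i ⊗ₜ[k] s j) • (v i * t j) := by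
  simp only [mulSig, LinearMap.coe_comp, Function.comp_apply, LinearEquiv.coe_coe,
    comul_tmul_eval hx hy, map_sum, TensorProduct.map_tmul, TensorProduct.lid_tmul,
    mulH, LinearMap.mul'_apply]

/-- comul of a pure triple tensor in H ⊗ (H ⊗ H). -/
theorem comul_tmul3_eval {a b c : H} {ιa ιb ιc : Type u}
    {Pa : Finset ιa} {Pb : Finset ιb} {Pc : Finset ιc}
    {ua va : ιa → H} {ub vb : ιb → H} {uc vc : ιc → H}
    (ha : Coalgebra.comul (R := k) a = ∑ i ∈ Pa, ua i ⊗ₜ[k] va i)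
    (hb : Coalgebra.comul (R := k) b = ∑ j ∈ Pb, ub j ⊗ₜ[k] vb j)
    (hc : Coalgebra.comul (R := k) c = ∑ m ∈ Pc, uc m ⊗ₜ[k] vc m) :
    Coalgebra.comul (R := k) (a ⊗ₜ[k] (b ⊗ₜ[k] c)) =
      ∑ i ∈ Pa, ∑ j ∈ Pb, ∑ m ∈ Pc,
        (ua i ⊗ₜ[k] (ub j ⊗ₜ[k] uc m)) ⊗ₜ[k] (va i ⊗ₜ[k] (vb j ⊗ₜ[k] vc m)) := by
  have h0 : (Coalgebra.comul (R := k) (A := H ⊗[k] (H ⊗[k] H))) =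
      (TensorProduct.tensorTensorTensorComm k H H (H ⊗[k] H) (H ⊗[k] H)).toLinearMap ∘ₗ
        TensorProduct.map Coalgebra.comul Coalgebra.comul := rfl
  rw [h0]
  simp only [LinearMap.coe_comp, Function.comp_apply, TensorProduct.map_tmul,
    ha, comul_tmul_eval hb hc, TensorProduct.sum_tmul, TensorProduct.tmul_sum, map_sum,
    TensorProduct.tensorTensorTensorComm_tmul, LinearEquiv.coe_coe]
  rw [sum_rot3]
  exact Finset.sum_congr rfl fun _ _ => Finset.sum_comm

theorem conv_eval3 (f g : H ⊗[k] (H ⊗[k] H) →ₗ[k] k) {a b c : H} {ιa ιb ιc : Type u}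
    {Pa : Finset ιa} {Pb : Finset ιb} {Pc : Finset ιc}
    {ua va : ιa → H} {ub vb : ιb → H} {uc vc : ιc → H}
    (ha : Coalgebra.comul (R := k) a = ∑ i ∈ Pa, ua i ⊗ₜ[k] va i)
    (hb : Coalgebra.comul (R := k) b = ∑ j ∈ Pb, ub j ⊗ₜ[k] vb j)
    (hc : Coalgebra.comul (R := k) c = ∑ m ∈ Pc, uc m ⊗ₜ[k] vc m) :
    conv f g (a ⊗ₜ[k] (b ⊗ₜ[k] c)) =
      ∑ i ∈ Pa, ∑ j ∈ Pb, ∑ m ∈ Pc,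
        f (ua i ⊗ₜ[k] (ub j ⊗ₜ[k] uc m)) * g (va i ⊗ₜ[k] (vb j ⊗ₜ[k] vc m)) := by
  simp only [conv, LinearMap.coe_comp, Function.comp_apply,
    comul_tmul3_eval ha hb hc, map_sum, TensorProduct.map_tmul, LinearMap.mul'_apply]

/-- counit collapse, counit on left components. -/
theorem counit_collapse_left (g : H →ₗ[k] M) {x : H} {ι : Type u} {P : Finset ι}
    {u v : ι → H} (hx : Coalgebra.comul (R := k) x = ∑ i ∈ P, u i ⊗ₜ[k] v i) :
    ∑ i ∈ P, Coalgebra.counit (R := k) (u i) • g (v i) = g x := by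
  have h := congrArg ((TensorProduct.lid k M).toLinearMap ∘ₗ
    TensorProduct.map LinearMap.id g) (Coalgebra.rTensor_counit_comul (R := k) x)
  rw [hx] at h
  simpa [map_sum] using h

/-- counit collapse, counit on right components. -/
theorem counit_collapse_right (g : H →ₗ[k] M) {x : H} {ι : Type u} {P : Finset ι}
    {u v : ι → H} (hx : Coalgebra.comul (R := k) x = ∑ i ∈ P, u i ⊗ₜ[k] v i) :
    ∑ i ∈ P, Coalgebra.counit (R := k) (v i) • g (u i) = g x := by
  have h := congrArg ((TensorProduct.rid k M).toLinearMap ∘ₗ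
    TensorProduct.map g LinearMap.id) (Coalgebra.lTensor_counit_comul (R := k) x)
  rw [hx] at h
  simpa [map_sum] using h

theorem counit_collapse_left' (g : H →ₗ[k] k) {x : H} {ι : Type u} {P : Finset ι}
    {u v : ι → H} (hx : Coalgebra.comul (R := k) x = ∑ i ∈ P, u i ⊗ₜ[k] v i) :
    ∑ i ∈ P, Coalgebra.counit (R := k) (u i) * g (v i) = g x := by
  simpa [smul_eq_mul] using counit_collapse_left g hx

theorem counit_collapse_right' (g : H →ₗ[k] k) {x : H} {ι : Type u} {P : Finset ι}
    {u v : ι → H} (hx : Coalgebra.comul (R := k) x = ∑ i ∈ P, u i ⊗ₜ[k] v i) :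
    ∑ i ∈ P, Coalgebra.counit (R := k) (v i) * g (u i) = g x := by
  simpa [smul_eq_mul] using counit_collapse_right g hx

/-- coassociativity, as a rearrangement of double sums under a linear map. -/
theorem coassoc_sum (L : H ⊗[k] (H ⊗[k] H) →ₗ[k] M) {x : H} {ι κ : Type u}
    {P : Finset ι} {u v : ι → H}
    (hx : Coalgebra.comul (R := k) x = ∑ i ∈ P, u i ⊗ₜ[k] v i)
    {P1 P2 : ι → Finset κ} {p q r w : ι → κ → H}
    (hu : ∀ i ∈ P, Coalgebra.comul (R := k) (u i) = ∑ s ∈ P1 i, p i s ⊗ₜ[k] q i s)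
    (hv : ∀ i ∈ P, Coalgebra.comul (R := k) (v i) = ∑ s ∈ P2 i, r i s ⊗ₜ[k] w i s) :
    ∑ i ∈ P, ∑ s ∈ P1 i, L (p i s ⊗ₜ[k] (q i s ⊗ₜ[k] v i)) =
      ∑ i ∈ P, ∑ s ∈ P2 i, L (u i ⊗ₜ[k] (r i s ⊗ₜ[k] w i s)) := by
  have h := Coalgebra.coassoc_apply (R := k) x
  have hL : (TensorProduct.assoc k H H H) (LinearMap.rTensor H (Coalgebra.comul (R := k))
      (Coalgebra.comul (R := k) x)) =
      ∑ i ∈ P, ∑ s ∈ P1 i, p i s ⊗ₜ[k] (q i s ⊗ₜ[k] v i) := by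
    rw [hx, map_sum, map_sum, Finset.sum_congr rfl fun i hi => ?_]
    rw [LinearMap.rTensor_tmul, hu i hi, TensorProduct.sum_tmul, map_sum]
    exact Finset.sum_congr rfl fun s _ => rfl
  have hR : LinearMap.lTensor H (Coalgebra.comul (R := k)) (Coalgebra.comul (R := k) x) =
      ∑ i ∈ P, ∑ s ∈ P2 i, u i ⊗ₜ[k] (r i s ⊗ₜ[k] w i s) := by
    rw [hx, map_sum, Finset.sum_congr rfl fun i hi => ?_]
    rw [LinearMap.lTensor_tmul, hv i hi, TensorProduct.tmul_sum]
  have := congrArg L (hL.symm.trans (h.trans hR))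
  simpa [map_sum] using this

/-- comul of a product, from representations of the factors. -/
theorem comul_mul_rep {x y : H} {ιx ιy : Type u} {Px : Finset ιx} {Py : Finset ιy}
    {u v : ιx → H} {s t : ιy → H}
    (hx : Coalgebra.comul (R := k) x = ∑ i ∈ Px, u i ⊗ₜ[k] v i)
    (hy : Coalgebra.comul (R := k) y = ∑ j ∈ Py, s j ⊗ₜ[k] t j) :
    Coalgebra.comul (R := k) (x * y) =
      ∑ st ∈ Px ×ˢ Py, (u st.1 * s st.2) ⊗ₜ[k] (v st.1 * t st.2) := by
  rw [Bialgebra.comul_mul, hx, hy, Finset.sum_mul_sum, Finset.sum_product]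
  simp [Algebra.TensorProduct.tmul_mul_tmul]

def L3map (σf σg : H →ₗ[k] k) (h : H →ₗ[k] H) : H ⊗[k] (H ⊗[k] H) →ₗ[k] H :=
  (TensorProduct.lid k H).toLinearMap ∘ₗ TensorProduct.map σf
    ((TensorProduct.lid k H).toLinearMap ∘ₗ TensorProduct.map σg h)

@[simp] theorem L3map_apply (σf σg : H →ₗ[k] k) (h : H →ₗ[k] H) (x y z : H) :
    L3map σf σg h (x ⊗ₜ[k] (y ⊗ₜ[k] z)) = (σf x * σg y) • h z := by
  simp [L3map, smul_smul, mul_comm]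

theorem counit_mulSig (σ : H ⊗[k] H →ₗ[k] k) (x y : H) :
    Coalgebra.counit (R := k) (mulSig σ (x ⊗ₜ[k] y)) = σ (x ⊗ₜ[k] y) := by
  have hx := (Coalgebra.Repr.arbitrary k x).eq.symm
  have hy := (Coalgebra.Repr.arbitrary k y).eq.symm
  set rx := Coalgebra.Repr.arbitrary k x
  set ry := Coalgebra.Repr.arbitrary k y
  have hinner : ∀ i, ∑ j ∈ ry.index,
      Coalgebra.counit (R := k) (ry.right j) * σ (rx.left i ⊗ₜ[k] ry.left j)
        = σ (rx.left i ⊗ₜ[k] y) := fun i => by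
    simpa using counit_collapse_right' (σ ∘ₗ TensorProduct.mk k H H (rx.left i)) hy
  rw [mulSig_eval σ hx hy]
  simp only [map_sum, map_smul, smul_eq_mul, Bialgebra.counit_mul]
  calc ∑ i ∈ rx.index, ∑ j ∈ ry.index,
        σ (rx.left i ⊗ₜ[k] ry.left j) *
          (Coalgebra.counit (R := k) (rx.right i) * Coalgebra.counit (R := k) (ry.right j))
      = ∑ i ∈ rx.index, Coalgebra.counit (R := k) (rx.right i) *
          ∑ j ∈ ry.index, Coalgebra.counit (R := k) (ry.right j) *
            σ (rx.left i ⊗ₜ[k] ry.left j) := by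
        refine Finset.sum_congr rfl fun i _ => ?_
        rw [Finset.mul_sum]
        exact Finset.sum_congr rfl fun j _ => by ring
    _ = ∑ i ∈ rx.index, Coalgebra.counit (R := k) (rx.right i) * σ (rx.left i ⊗ₜ[k] y) := by
        exact Finset.sum_congr rfl fun i _ => by rw [hinner i]
    _ = σ (x ⊗ₜ[k] y) := by
        simpa using counit_collapse_right' (σ ∘ₗ (TensorProduct.mk k H H).flip y) hx

theorem F_eval (σ : H ⊗[k] H →ₗ[k] k) {x y : H} (w : H)
    {ιx ιy : Type u} {Px : Finset ιx} {Py : Finset ιy} {u v : ιx → H} {s t : ιy → H}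
    (hx : Coalgebra.comul (R := k) x = ∑ i ∈ Px, u i ⊗ₜ[k] v i)
    (hy : Coalgebra.comul (R := k) y = ∑ j ∈ Py, s j ⊗ₜ[k] t j) :
    conv (σ ∘ₗ TensorProduct.map LinearMap.id pr1)
      (σ ∘ₗ TensorProduct.map mulH LinearMap.id ∘ₗ (TensorProduct.assoc k H H H).symm.toLinearMap)
      (x ⊗ₜ[k] (y ⊗ₜ[k] w)) =
    ∑ i ∈ Px, ∑ j ∈ Py, σ (u i ⊗ₜ[k] s j) * σ ((v i * t j) ⊗ₜ[k] w) := by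
  have hw := (Coalgebra.Repr.arbitrary k w).eq.symm
  set rw' := Coalgebra.Repr.arbitrary k w
  rw [conv_eval3 _ _ hx hy hw]
  refine Finset.sum_congr rfl fun i _ => Finset.sum_congr rfl fun j _ => ?_
  simp only [pr1, mulH, LinearMap.coe_comp, Function.comp_apply, TensorProduct.map_tmul,
    LinearMap.id_coe, id_eq, TensorProduct.rid_tmul, LinearEquiv.coe_coe,
    TensorProduct.assoc_symm_tmul, LinearMap.mul'_apply, TensorProduct.tmul_smul,
    map_smul, smul_eq_mul]
  calc ∑ m ∈ rw'.index,
        Coalgebra.counit (R := k) (rw'.left m) * σ (u i ⊗ₜ[k] s j) * σ ((v i * t j) ⊗ₜ[k] rw'.right m)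
      = σ (u i ⊗ₜ[k] s j) * ∑ m ∈ rw'.index,
          Coalgebra.counit (R := k) (rw'.left m) * σ ((v i * t j) ⊗ₜ[k] rw'.right m) := by
        rw [Finset.mul_sum]; exact Finset.sum_congr rfl fun m _ => by ring
    _ = σ (u i ⊗ₜ[k] s j) * σ ((v i * t j) ⊗ₜ[k] w) := by
        congr 1
        simpa using counit_collapse_left' (σ ∘ₗ TensorProduct.mk k H H (v i * t j)) hw

theorem G_eval (σ : H ⊗[k] H →ₗ[k] k) (x : H) {y z : H}
    {ιy ιz : Type u} {Py : Finset ιy} {Pz : Finset ιz} {s t : ιy → H} {p q : ιz → H}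
    (hy : Coalgebra.comul (R := k) y = ∑ j ∈ Py, s j ⊗ₜ[k] t j)
    (hz : Coalgebra.comul (R := k) z = ∑ m ∈ Pz, p m ⊗ₜ[k] q m) :
    conv (σ ∘ₗ dropL3) (σ ∘ₗ TensorProduct.map LinearMap.id mulH)
      (x ⊗ₜ[k] (y ⊗ₜ[k] z)) =
    ∑ j ∈ Py, ∑ m ∈ Pz, σ (s j ⊗ₜ[k] p m) * σ (x ⊗ₜ[k] (t j * q m)) := by
  have hx := (Coalgebra.Repr.arbitrary k x).eq.symm
  set rx := Coalgebra.Repr.arbitrary k x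
  rw [conv_eval3 _ _ hx hy hz]
  simp only [dropL3, mulH, LinearMap.coe_comp, Function.comp_apply, TensorProduct.map_tmul,
    LinearMap.id_coe, id_eq, TensorProduct.lid_tmul, LinearEquiv.coe_coe,
    LinearMap.mul'_apply, map_smul, smul_eq_mul]
  rw [← sum_rot3]
  rw [Finset.sum_comm]
  refine Finset.sum_congr rfl fun j _ => Finset.sum_congr rfl fun m _ => ?_
  calc ∑ i ∈ rx.index,
        Coalgebra.counit (R := k) (rx.left i) * σ (s j ⊗ₜ[k] p m) * σ (rx.right i ⊗ₜ[k] (t j * q m))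
      = σ (s j ⊗ₜ[k] p m) * ∑ i ∈ rx.index,
          Coalgebra.counit (R := k) (rx.left i) * σ (rx.right i ⊗ₜ[k] (t j * q m)) := by
        rw [Finset.mul_sum]; exact Finset.sum_congr rfl fun i _ => by ring
    _ = σ (s j ⊗ₜ[k] p m) * σ (x ⊗ₜ[k] (t j * q m)) := by
        congr 1
        simpa using counit_collapse_left' (σ ∘ₗ (TensorProduct.mk k H H).flip (t j * q m)) hx

theorem mulSig_left_expand (σ : H ⊗[k] H →ₗ[k] k) {a b : H} (c : H)
    {ιa ιb : Type u} {Pa : Finset ιa} {Pb : Finset ιb} {ua va : ιa → H} {ub vb : ιb → H}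
    (ha : Coalgebra.comul (R := k) a = ∑ i ∈ Pa, ua i ⊗ₜ[k] va i)
    (hb : Coalgebra.comul (R := k) b = ∑ j ∈ Pb, ub j ⊗ₜ[k] vb j) :
    mulSig σ (mulSig σ (a ⊗ₜ[k] b) ⊗ₜ[k] c) =
      ∑ i ∈ Pa, ∑ j ∈ Pb, σ (ua i ⊗ₜ[k] ub j) • mulSig σ ((va i * vb j) ⊗ₜ[k] c) := by
  rw [mulSig_eval σ ha hb]
  simp only [TensorProduct.sum_tmul, map_sum]
  refine Finset.sum_congr rfl fun i _ => Finset.sum_congr rfl fun j _ => ?_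
  rw [← TensorProduct.smul_tmul', map_smul]

theorem mulSig_right_expand (σ : H ⊗[k] H →ₗ[k] k) (a : H) {b c : H}
    {ιb ιc : Type u} {Pb : Finset ιb} {Pc : Finset ιc} {ub vb : ιb → H} {uc vc : ιc → H}
    (hb : Coalgebra.comul (R := k) b = ∑ j ∈ Pb, ub j ⊗ₜ[k] vb j)
    (hc : Coalgebra.comul (R := k) c = ∑ m ∈ Pc, uc m ⊗ₜ[k] vc m) :
    mulSig σ (a ⊗ₜ[k] mulSig σ (b ⊗ₜ[k] c)) =
      ∑ j ∈ Pb, ∑ m ∈ Pc, σ (ub j ⊗ₜ[k] uc m) • mulSig σ (a ⊗ₜ[k] (vb j * vc m)) := by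
  rw [mulSig_eval σ hb hc]
  simp only [TensorProduct.tmul_sum, map_sum]
  refine Finset.sum_congr rfl fun j _ => Finset.sum_congr rfl fun m _ => ?_
  rw [TensorProduct.tmul_smul, map_smul]


theorem Rbase {α β γ δ : Type u} {N : Type u} [AddCommMonoid N]
    (A : Finset α) (S : α → Finset β) (B : Finset γ) (T : γ → Finset δ)
    (f : α → β → γ → δ → N) :
    ∑ a ∈ A, ∑ s ∈ S a, ∑ b ∈ B, ∑ t ∈ T b, f a s b t
      = ∑ b ∈ B, ∑ t ∈ T b, ∑ a ∈ A, ∑ s ∈ S a, f a s b t := by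
  rw [sum_comm_dep A S B]
  exact Finset.sum_congr rfl fun b _ => sum_comm_dep A S (T b) _

theorem R1 {α β γ δ ε' : Type u} {N : Type u} [AddCommMonoid N]
    (A : Finset α) (B : Finset γ) (S : α → Finset β) (T : γ → Finset δ) (M : Finset ε')
    (f : α → γ → β → δ → ε' → N) :
    ∑ a ∈ A, ∑ b ∈ B, ∑ s ∈ S a, ∑ t ∈ T b, ∑ m ∈ M, f a b s t m
      = ∑ b ∈ B, ∑ t ∈ T b, ∑ m ∈ M, ∑ a ∈ A, ∑ s ∈ S a, f a b s t m :=
  calc ∑ a ∈ A, ∑ b ∈ B, ∑ s ∈ S a, ∑ t ∈ T b, ∑ m ∈ M, f a b s t m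
      = ∑ a ∈ A, ∑ s ∈ S a, ∑ b ∈ B, ∑ t ∈ T b, ∑ m ∈ M, f a b s t m :=
        Finset.sum_congr rfl fun a _ => Finset.sum_comm
    _ = ∑ b ∈ B, ∑ t ∈ T b, ∑ a ∈ A, ∑ s ∈ S a, ∑ m ∈ M, f a b s t m :=
        Rbase A S B T _
    _ = ∑ b ∈ B, ∑ t ∈ T b, ∑ m ∈ M, ∑ a ∈ A, ∑ s ∈ S a, f a b s t m :=
        Finset.sum_congr rfl fun b _ => Finset.sum_congr rfl fun t _ =>
          sum_comm_dep A S M _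

theorem R2 {α β γ δ ε' : Type u} {N : Type u} [AddCommMonoid N]
    (A : Finset α) (S : α → Finset β) (M : Finset ε') (B : Finset γ) (T : γ → Finset δ)
    (f : α → β → ε' → γ → δ → N) :
    ∑ a ∈ A, ∑ s ∈ S a, ∑ m ∈ M, ∑ b ∈ B, ∑ t ∈ T b, f a s m b t
      = ∑ b ∈ B, ∑ t ∈ T b, ∑ m ∈ M, ∑ a ∈ A, ∑ s ∈ S a, f a s m b t :=
  calc ∑ a ∈ A, ∑ s ∈ S a, ∑ m ∈ M, ∑ b ∈ B, ∑ t ∈ T b, f a s m b t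
      = ∑ a ∈ A, ∑ s ∈ S a, ∑ b ∈ B, ∑ t ∈ T b, ∑ m ∈ M, f a s m b t := by
        refine Finset.sum_congr rfl fun a _ => Finset.sum_congr rfl fun s _ =>
          (sum_comm_dep B T M _).symm
    _ = ∑ b ∈ B, ∑ t ∈ T b, ∑ a ∈ A, ∑ s ∈ S a, ∑ m ∈ M, f a s m b t :=
        Rbase A S B T _
    _ = ∑ b ∈ B, ∑ t ∈ T b, ∑ m ∈ M, ∑ a ∈ A, ∑ s ∈ S a, f a s m b t :=
        Finset.sum_congr rfl fun b _ => Finset.sum_congr rfl fun t _ =>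
          sum_comm_dep A S M _

theorem R4 {β γ δ ε' : Type u} {N : Type u} [AddCommMonoid N]
    (S : Finset β) (M : Finset ε') (B : Finset γ) (T : γ → Finset δ)
    (f : β → ε' → γ → δ → N) :
    ∑ s ∈ S, ∑ m ∈ M, ∑ b ∈ B, ∑ t ∈ T b, f s m b t
      = ∑ b ∈ B, ∑ m ∈ M, ∑ s ∈ S, ∑ t ∈ T b, f s m b t :=
  calc ∑ s ∈ S, ∑ m ∈ M, ∑ b ∈ B, ∑ t ∈ T b, f s m b t
      = ∑ m ∈ M, ∑ s ∈ S, ∑ b ∈ B, ∑ t ∈ T b, f s m b t := Finset.sum_comm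
    _ = ∑ m ∈ M, ∑ b ∈ B, ∑ s ∈ S, ∑ t ∈ T b, f s m b t :=
        Finset.sum_congr rfl fun m _ => Finset.sum_comm
    _ = ∑ b ∈ B, ∑ m ∈ M, ∑ s ∈ S, ∑ t ∈ T b, f s m b t := Finset.sum_comm

theorem forward_cocycle (σ : H ⊗[k] H →ₗ[k] k)
    (Hassoc : ∀ a b c : H, mulSig σ (mulSig σ (a ⊗ₜ[k] b) ⊗ₜ[k] c)
      = mulSig σ (a ⊗ₜ[k] mulSig σ (b ⊗ₜ[k] c))) : IsLeftCocycle σ := by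
  unfold IsLeftCocycle
  apply TensorProduct.ext'
  intro a y
  induction y using TensorProduct.induction_on with
  | zero => simp
  | add y1 y2 h1 h2 => simp only [TensorProduct.tmul_add, map_add, h1, h2]
  | tmul b c =>
    have ha := (Coalgebra.Repr.arbitrary k a).eq.symm
    have hb := (Coalgebra.Repr.arbitrary k b).eq.symm
    have hc := (Coalgebra.Repr.arbitrary k c).eq.symm
    set ra := Coalgebra.Repr.arbitrary k a
    set rb := Coalgebra.Repr.arbitrary k b
    set rc := Coalgebra.Repr.arbitrary k c
    rw [F_eval σ c ha hb, G_eval σ a hb hc]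
    calc ∑ i ∈ ra.index, ∑ j ∈ rb.index,
          σ (ra.left i ⊗ₜ[k] rb.left j) * σ ((ra.right i * rb.right j) ⊗ₜ[k] c)
        = ∑ i ∈ ra.index, ∑ j ∈ rb.index, σ (ra.left i ⊗ₜ[k] rb.left j) *
            Coalgebra.counit (R := k) (mulSig σ ((ra.right i * rb.right j) ⊗ₜ[k] c)) := by
          exact Finset.sum_congr rfl fun i _ => Finset.sum_congr rfl fun j _ => by
            rw [counit_mulSig]
      _ = Coalgebra.counit (R := k) (∑ i ∈ ra.index, ∑ j ∈ rb.index,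
            σ (ra.left i ⊗ₜ[k] rb.left j) • mulSig σ ((ra.right i * rb.right j) ⊗ₜ[k] c)) := by
          simp only [map_sum, map_smul, smul_eq_mul]
      _ = Coalgebra.counit (R := k) (mulSig σ (mulSig σ (a ⊗ₜ[k] b) ⊗ₜ[k] c)) := by
          rw [mulSig_left_expand σ c ha hb]
      _ = Coalgebra.counit (R := k) (mulSig σ (a ⊗ₜ[k] mulSig σ (b ⊗ₜ[k] c))) := by
          rw [Hassoc a b c]
      _ = Coalgebra.counit (R := k) (∑ j ∈ rb.index, ∑ m ∈ rc.index,
            σ (rb.left j ⊗ₜ[k] rc.left m) • mulSig σ (a ⊗ₜ[k] (rb.right j * rc.right m))) := by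
          rw [mulSig_right_expand σ a hb hc]
      _ = ∑ j ∈ rb.index, ∑ m ∈ rc.index,
            σ (rb.left j ⊗ₜ[k] rc.left m) * σ (a ⊗ₜ[k] (rb.right j * rc.right m)) := by
          simp only [map_sum, map_smul, smul_eq_mul]
          exact Finset.sum_congr rfl fun j _ => Finset.sum_congr rfl fun m _ => by
            rw [counit_mulSig]


theorem cocycleExpandL (σ : H ⊗[k] H →ₗ[k] k) {a b c : H}
    {ιa ιb ιc : Type u} {Pa : Finset ιa} {Pb : Finset ιb} {Pc : Finset ιc}
    {ua va : ιa → H} {ub vb : ιb → H} {uc vc : ιc → H}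
    (ha : Coalgebra.comul (R := k) a = ∑ i ∈ Pa, ua i ⊗ₜ[k] va i)
    (hb : Coalgebra.comul (R := k) b = ∑ j ∈ Pb, ub j ⊗ₜ[k] vb j)
    (hc : Coalgebra.comul (R := k) c = ∑ m ∈ Pc, uc m ⊗ₜ[k] vc m) :
    mulSig σ (mulSig σ (a ⊗ₜ[k] b) ⊗ₜ[k] c) =
      ∑ i ∈ Pa, ∑ j ∈ Pb, ∑ m ∈ Pc,
        conv (σ ∘ₗ TensorProduct.map LinearMap.id pr1)
          (σ ∘ₗ TensorProduct.map mulH LinearMap.id ∘ₗ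
            (TensorProduct.assoc k H H H).symm.toLinearMap)
          (ua i ⊗ₜ[k] (ub j ⊗ₜ[k] uc m)) • (va i * (vb j * vc m)) := by
  rw [mulSig_left_expand σ c ha hb]
  calc ∑ i ∈ Pa, ∑ j ∈ Pb,
        σ (ua i ⊗ₜ[k] ub j) • mulSig σ ((va i * vb j) ⊗ₜ[k] c)
      = ∑ i ∈ Pa, ∑ j ∈ Pb, ∑ s ∈ (ℛ k (va i)).index, ∑ t ∈ (ℛ k (vb j)).index,
          ∑ m ∈ Pc,
          (σ (ua i ⊗ₜ[k] ub j) *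
            σ (((ℛ k (va i)).left s * (ℛ k (vb j)).left t) ⊗ₜ[k] uc m)) •
            ((ℛ k (va i)).right s * ((ℛ k (vb j)).right t * vc m)) := by
        refine Finset.sum_congr rfl fun i _ => Finset.sum_congr rfl fun j _ => ?_
        rw [mulSig_eval σ (comul_mul_rep (ℛ k (va i)).eq.symm (ℛ k (vb j)).eq.symm) hc,
          Finset.sum_product]
        simp only [Finset.smul_sum, smul_smul, mul_assoc]
    _ = ∑ j ∈ Pb, ∑ t ∈ (ℛ k (vb j)).index, ∑ m ∈ Pc, ∑ i ∈ Pa,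
          ∑ s ∈ (ℛ k (va i)).index,
          (σ (ua i ⊗ₜ[k] ub j) *
            σ (((ℛ k (va i)).left s * (ℛ k (vb j)).left t) ⊗ₜ[k] uc m)) •
            ((ℛ k (va i)).right s * ((ℛ k (vb j)).right t * vc m)) :=
        R1 Pa Pb (fun i => (ℛ k (va i)).index) (fun j => (ℛ k (vb j)).index) Pc _
    _ = ∑ j ∈ Pb, ∑ t ∈ (ℛ k (vb j)).index, ∑ m ∈ Pc, ∑ i ∈ Pa,
          ∑ s ∈ (ℛ k (ua i)).index,
          (σ ((ℛ k (ua i)).left s ⊗ₜ[k] ub j) *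
            σ (((ℛ k (ua i)).right s * (ℛ k (vb j)).left t) ⊗ₜ[k] uc m)) •
            (va i * ((ℛ k (vb j)).right t * vc m)) := by
        refine Finset.sum_congr rfl fun j _ => Finset.sum_congr rfl fun t _ =>
          Finset.sum_congr rfl fun m _ => ?_
        have hco := coassoc_sum (L3map (σ ∘ₗ (TensorProduct.mk k H H).flip (ub j))
            ((σ ∘ₗ (TensorProduct.mk k H H).flip (uc m)) ∘ₗ
              LinearMap.mulRight k ((ℛ k (vb j)).left t))
            (LinearMap.mulRight k ((ℛ k (vb j)).right t * vc m))) ha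
            (fun i _ => (ℛ k (ua i)).eq.symm)
            (fun i _ => (ℛ k (va i)).eq.symm)
        simp only [L3map_apply, LinearMap.comp_apply, TensorProduct.mk_apply,
          LinearMap.flip_apply, LinearMap.mulRight_apply] at hco
        exact hco.symm
    _ = ∑ i ∈ Pa, ∑ s ∈ (ℛ k (ua i)).index, ∑ m ∈ Pc, ∑ j ∈ Pb,
          ∑ t ∈ (ℛ k (vb j)).index,
          (σ ((ℛ k (ua i)).left s ⊗ₜ[k] ub j) *
            σ (((ℛ k (ua i)).right s * (ℛ k (vb j)).left t) ⊗ₜ[k] uc m)) •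
            (va i * ((ℛ k (vb j)).right t * vc m)) :=
        (R2 Pa (fun i => (ℛ k (ua i)).index) Pc Pb (fun j => (ℛ k (vb j)).index) _).symm
    _ = ∑ i ∈ Pa, ∑ s ∈ (ℛ k (ua i)).index, ∑ m ∈ Pc, ∑ j ∈ Pb,
          ∑ t ∈ (ℛ k (ub j)).index,
          (σ ((ℛ k (ua i)).left s ⊗ₜ[k] (ℛ k (ub j)).left t) *
            σ (((ℛ k (ua i)).right s * (ℛ k (ub j)).right t) ⊗ₜ[k] uc m)) •
            (va i * (vb j * vc m)) := by
        refine Finset.sum_congr rfl fun i _ => Finset.sum_congr rfl fun s _ =>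
          Finset.sum_congr rfl fun m _ => ?_
        have hco := coassoc_sum (L3map (σ ∘ₗ TensorProduct.mk k H H ((ℛ k (ua i)).left s))
            ((σ ∘ₗ (TensorProduct.mk k H H).flip (uc m)) ∘ₗ
              LinearMap.mulLeft k ((ℛ k (ua i)).right s))
            (LinearMap.mulLeft k (va i) ∘ₗ LinearMap.mulRight k (vc m))) hb
            (fun j _ => (ℛ k (ub j)).eq.symm)
            (fun j _ => (ℛ k (vb j)).eq.symm)
        simp only [L3map_apply, LinearMap.comp_apply, TensorProduct.mk_apply,
          LinearMap.flip_apply, LinearMap.mulRight_apply, LinearMap.mulLeft_apply] at hco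
        exact hco.symm
    _ = ∑ i ∈ Pa, ∑ j ∈ Pb, ∑ m ∈ Pc, ∑ s ∈ (ℛ k (ua i)).index,
          ∑ t ∈ (ℛ k (ub j)).index,
          (σ ((ℛ k (ua i)).left s ⊗ₜ[k] (ℛ k (ub j)).left t) *
            σ (((ℛ k (ua i)).right s * (ℛ k (ub j)).right t) ⊗ₜ[k] uc m)) •
            (va i * (vb j * vc m)) := by
        refine Finset.sum_congr rfl fun i _ => ?_
        exact R4 (ℛ k (ua i)).index Pc Pb (fun j => (ℛ k (ub j)).index) _
    _ = ∑ i ∈ Pa, ∑ j ∈ Pb, ∑ m ∈ Pc,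
        conv (σ ∘ₗ TensorProduct.map LinearMap.id pr1)
          (σ ∘ₗ TensorProduct.map mulH LinearMap.id ∘ₗ
            (TensorProduct.assoc k H H H).symm.toLinearMap)
          (ua i ⊗ₜ[k] (ub j ⊗ₜ[k] uc m)) • (va i * (vb j * vc m)) := by
        refine Finset.sum_congr rfl fun i _ => Finset.sum_congr rfl fun j _ =>
          Finset.sum_congr rfl fun m _ => ?_
        rw [F_eval σ (uc m) (ℛ k (ua i)).eq.symm (ℛ k (ub j)).eq.symm]
        simp only [Finset.sum_smul]


theorem R5 {α β γ δ : Type u} {N : Type u} [AddCommMonoid N]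
    (M : Finset α) (I : Finset β) (S : Finset γ) (T : α → Finset δ)
    (f : α → β → γ → δ → N) :
    ∑ m ∈ M, ∑ i ∈ I, ∑ s ∈ S, ∑ t ∈ T m, f m i s t
      = ∑ s ∈ S, ∑ i ∈ I, ∑ m ∈ M, ∑ t ∈ T m, f m i s t :=
  calc ∑ m ∈ M, ∑ i ∈ I, ∑ s ∈ S, ∑ t ∈ T m, f m i s t
      = ∑ m ∈ M, ∑ s ∈ S, ∑ i ∈ I, ∑ t ∈ T m, f m i s t :=
        Finset.sum_congr rfl fun m _ => Finset.sum_comm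
    _ = ∑ s ∈ S, ∑ m ∈ M, ∑ i ∈ I, ∑ t ∈ T m, f m i s t := Finset.sum_comm
    _ = ∑ s ∈ S, ∑ i ∈ I, ∑ m ∈ M, ∑ t ∈ T m, f m i s t :=
        Finset.sum_congr rfl fun s _ => Finset.sum_comm

theorem cocycleExpandR (σ : H ⊗[k] H →ₗ[k] k) {a b c : H}
    {ιa ιb ιc : Type u} {Pa : Finset ιa} {Pb : Finset ιb} {Pc : Finset ιc}
    {ua va : ιa → H} {ub vb : ιb → H} {uc vc : ιc → H}
    (ha : Coalgebra.comul (R := k) a = ∑ i ∈ Pa, ua i ⊗ₜ[k] va i)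
    (hb : Coalgebra.comul (R := k) b = ∑ j ∈ Pb, ub j ⊗ₜ[k] vb j)
    (hc : Coalgebra.comul (R := k) c = ∑ m ∈ Pc, uc m ⊗ₜ[k] vc m) :
    mulSig σ (a ⊗ₜ[k] mulSig σ (b ⊗ₜ[k] c)) =
      ∑ i ∈ Pa, ∑ j ∈ Pb, ∑ m ∈ Pc,
        conv (σ ∘ₗ dropL3) (σ ∘ₗ TensorProduct.map LinearMap.id mulH)
          (ua i ⊗ₜ[k] (ub j ⊗ₜ[k] uc m)) • (va i * (vb j * vc m)) := by
  rw [mulSig_right_expand σ a hb hc]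
  calc ∑ j ∈ Pb, ∑ m ∈ Pc,
        σ (ub j ⊗ₜ[k] uc m) • mulSig σ (a ⊗ₜ[k] (vb j * vc m))
      = ∑ j ∈ Pb, ∑ m ∈ Pc, ∑ i ∈ Pa, ∑ s ∈ (ℛ k (vb j)).index,
          ∑ t ∈ (ℛ k (vc m)).index,
          (σ (ub j ⊗ₜ[k] uc m) *
            σ (ua i ⊗ₜ[k] ((ℛ k (vb j)).left s * (ℛ k (vc m)).left t))) •
            (va i * ((ℛ k (vb j)).right s * (ℛ k (vc m)).right t)) := by
        refine Finset.sum_congr rfl fun j _ => Finset.sum_congr rfl fun m _ => ?_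
        rw [mulSig_eval σ ha (comul_mul_rep (ℛ k (vb j)).eq.symm (ℛ k (vc m)).eq.symm)]
        simp only [Finset.sum_product, Finset.smul_sum, smul_smul]
    _ = ∑ j ∈ Pb, ∑ s ∈ (ℛ k (vb j)).index, ∑ i ∈ Pa, ∑ m ∈ Pc,
          ∑ t ∈ (ℛ k (vc m)).index,
          (σ (ub j ⊗ₜ[k] uc m) *
            σ (ua i ⊗ₜ[k] ((ℛ k (vb j)).left s * (ℛ k (vc m)).left t))) •
            (va i * ((ℛ k (vb j)).right s * (ℛ k (vc m)).right t)) := by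
        exact Finset.sum_congr rfl fun j _ =>
          R5 Pc Pa (ℛ k (vb j)).index (fun m => (ℛ k (vc m)).index) _
    _ = ∑ j ∈ Pb, ∑ s ∈ (ℛ k (vb j)).index, ∑ i ∈ Pa, ∑ m ∈ Pc,
          ∑ t ∈ (ℛ k (uc m)).index,
          (σ (ub j ⊗ₜ[k] (ℛ k (uc m)).left t) *
            σ (ua i ⊗ₜ[k] ((ℛ k (vb j)).left s * (ℛ k (uc m)).right t))) •
            (va i * ((ℛ k (vb j)).right s * vc m)) := by
        refine Finset.sum_congr rfl fun j _ => Finset.sum_congr rfl fun s _ =>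
          Finset.sum_congr rfl fun i _ => ?_
        have hco := coassoc_sum (L3map (σ ∘ₗ TensorProduct.mk k H H (ub j))
            ((σ ∘ₗ TensorProduct.mk k H H (ua i)) ∘ₗ
              LinearMap.mulLeft k ((ℛ k (vb j)).left s))
            (LinearMap.mulLeft k (va i) ∘ₗ
              LinearMap.mulLeft k ((ℛ k (vb j)).right s))) hc
            (fun m _ => (ℛ k (uc m)).eq.symm)
            (fun m _ => (ℛ k (vc m)).eq.symm)
        simp only [L3map_apply, LinearMap.comp_apply, TensorProduct.mk_apply,
          LinearMap.flip_apply, LinearMap.mulLeft_apply] at hco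
        exact hco.symm
    _ = ∑ m ∈ Pc, ∑ t ∈ (ℛ k (uc m)).index, ∑ i ∈ Pa, ∑ j ∈ Pb,
          ∑ s ∈ (ℛ k (vb j)).index,
          (σ (ub j ⊗ₜ[k] (ℛ k (uc m)).left t) *
            σ (ua i ⊗ₜ[k] ((ℛ k (vb j)).left s * (ℛ k (uc m)).right t))) •
            (va i * ((ℛ k (vb j)).right s * vc m)) :=
        R2 Pb (fun j => (ℛ k (vb j)).index) Pa Pc (fun m => (ℛ k (uc m)).index) _
    _ = ∑ m ∈ Pc, ∑ t ∈ (ℛ k (uc m)).index, ∑ i ∈ Pa, ∑ j ∈ Pb,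
          ∑ s ∈ (ℛ k (ub j)).index,
          (σ ((ℛ k (ub j)).left s ⊗ₜ[k] (ℛ k (uc m)).left t) *
            σ (ua i ⊗ₜ[k] ((ℛ k (ub j)).right s * (ℛ k (uc m)).right t))) •
            (va i * (vb j * vc m)) := by
        refine Finset.sum_congr rfl fun m _ => Finset.sum_congr rfl fun t _ =>
          Finset.sum_congr rfl fun i _ => ?_
        have hco := coassoc_sum (L3map (σ ∘ₗ (TensorProduct.mk k H H).flip ((ℛ k (uc m)).left t))
            ((σ ∘ₗ TensorProduct.mk k H H (ua i)) ∘ₗ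
              LinearMap.mulRight k ((ℛ k (uc m)).right t))
            (LinearMap.mulLeft k (va i) ∘ₗ LinearMap.mulRight k (vc m))) hb
            (fun j _ => (ℛ k (ub j)).eq.symm)
            (fun j _ => (ℛ k (vb j)).eq.symm)
        simp only [L3map_apply, LinearMap.comp_apply, TensorProduct.mk_apply,
          LinearMap.flip_apply, LinearMap.mulLeft_apply, LinearMap.mulRight_apply] at hco
        exact hco.symm
    _ = ∑ i ∈ Pa, ∑ m ∈ Pc, ∑ t ∈ (ℛ k (uc m)).index, ∑ j ∈ Pb,
          ∑ s ∈ (ℛ k (ub j)).index,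
          (σ ((ℛ k (ub j)).left s ⊗ₜ[k] (ℛ k (uc m)).left t) *
            σ (ua i ⊗ₜ[k] ((ℛ k (ub j)).right s * (ℛ k (uc m)).right t))) •
            (va i * (vb j * vc m)) :=
        sum_comm_dep Pc (fun m => (ℛ k (uc m)).index) Pa _
    _ = ∑ i ∈ Pa, ∑ j ∈ Pb, ∑ s ∈ (ℛ k (ub j)).index, ∑ m ∈ Pc,
          ∑ t ∈ (ℛ k (uc m)).index,
          (σ ((ℛ k (ub j)).left s ⊗ₜ[k] (ℛ k (uc m)).left t) *
            σ (ua i ⊗ₜ[k] ((ℛ k (ub j)).right s * (ℛ k (uc m)).right t))) •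
            (va i * (vb j * vc m)) := by
        exact Finset.sum_congr rfl fun i _ =>
          Rbase Pc (fun m => (ℛ k (uc m)).index) Pb (fun j => (ℛ k (ub j)).index) _
    _ = ∑ i ∈ Pa, ∑ j ∈ Pb, ∑ m ∈ Pc, ∑ s ∈ (ℛ k (ub j)).index,
          ∑ t ∈ (ℛ k (uc m)).index,
          (σ ((ℛ k (ub j)).left s ⊗ₜ[k] (ℛ k (uc m)).left t) *
            σ (ua i ⊗ₜ[k] ((ℛ k (ub j)).right s * (ℛ k (uc m)).right t))) •
            (va i * (vb j * vc m)) := by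
        exact Finset.sum_congr rfl fun i _ => Finset.sum_congr rfl fun j _ =>
          Finset.sum_comm
    _ = ∑ i ∈ Pa, ∑ j ∈ Pb, ∑ m ∈ Pc,
        conv (σ ∘ₗ dropL3) (σ ∘ₗ TensorProduct.map LinearMap.id mulH)
          (ua i ⊗ₜ[k] (ub j ⊗ₜ[k] uc m)) • (va i * (vb j * vc m)) := by
        refine Finset.sum_congr rfl fun i _ => Finset.sum_congr rfl fun j _ =>
          Finset.sum_congr rfl fun m _ => ?_
        rw [G_eval σ (ua i) (ℛ k (ub j)).eq.symm (ℛ k (uc m)).eq.symm]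
        simp only [Finset.sum_smul]


end Aux


/-- The deformed product `h ·σ h' = σ(h₁,h'₁)h₂h'₂` on a bialgebra `H` is associative iff
`σ` is a left 2-cocycle. -/
theorem stmt1 {k : Type u} [Field k] {H : Type u} [Ring H] [Bialgebra k H]
    (σ : H ⊗[k] H →ₗ[k] k) :
    (∀ a b c : H, mulSig σ (mulSig σ (a ⊗ₜ[k] b) ⊗ₜ[k] c)
      = mulSig σ (a ⊗ₜ[k] mulSig σ (b ⊗ₜ[k] c))) ↔ IsLeftCocycle σ := by
  constructor
  · exact forward_cocycle σ
  · intro hcoc a b c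
    have ha := (Coalgebra.Repr.arbitrary k a).eq.symm
    have hb := (Coalgebra.Repr.arbitrary k b).eq.symm
    have hc := (Coalgebra.Repr.arbitrary k c).eq.symm
    rw [cocycleExpandL σ ha hb hc, cocycleExpandR σ ha hb hc]
    unfold IsLeftCocycle at hcoc
    rw [hcoc]

end
end

section
/- Let H be a bialgebra. The set Reg²_L(H) of lazy elements of Reg²(H), i.e. normalized convolution-invertible σ : H ⊗ H → k satisfying σ(h₁,h'₁)h₂h'₂ = h₁h'₁σ(h₂,h'₂) for all h,h' ∈ H, is a subgroup of Reg²(H) under convolution. -/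
open TensorProduct

noncomputable section

universe u

/-!
Convolution turns the linear maps `H ⊗ H → k` into a monoid with unit `ε`, and `Reg²(H)` into
(a subgroup of) its group of units. Precomposition with the coalgebra maps `h ↦ 1 ⊗ h` and
`h ↦ h ⊗ 1` is multiplicative, so normalized maps form the kernel of a monoid hom. Writing
`η : k → H` for the unit, `σ` is lazy exactly when `η ∘ σ` commutes with the multiplication
`H ⊗ H → H` in the convolution algebra `Hom(H ⊗ H, H)`; since `σ ↦ η ∘ σ` is multiplicative,
units with this property are closed under products and inverses.
-/

open Coalgebra WithConv

namespace MonoidHom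

variable {M N : Type*} [Monoid M] [Monoid N]

def unitsCommuteWith (ψ : M →* N) (n : N) : Subgroup Mˣ where
  carrier := {u | Commute (ψ u) n}
  mul_mem' {u v} hu hv := by
    change Commute (ψ (u * v : Mˣ)) n
    rw [Units.val_mul, map_mul]
    exact hu.mul_left hv
  one_mem' := by simp
  inv_mem' {u} hu := Commute.units_inv_left (u := Units.map ψ u) hu

lemma mem_unitsCommuteWith {ψ : M →* N} {n : N} {u : Mˣ} :
    u ∈ ψ.unitsCommuteWith n ↔ Commute (ψ u) n := Iff.rfl

end MonoidHom

section Convolution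

variable {k : Type u} [CommRing k] {C : Type u} [AddCommGroup C] [Module k C] [Coalgebra k C]

lemma toConv_conv (f g : C →ₗ[k] k) : toConv (conv f g) = toConv f * toConv g := rfl

lemma toConv_counit : toConv (counit : C →ₗ[k] k) = 1 := by
  ext; simp

variable (k C) in
def algebraMapCompConvHom (A : Type u) [Ring A] [Algebra k A] :
    WithConv (C →ₗ[k] k) →* WithConv (C →ₗ[k] A) where
  toFun f := toConv (Algebra.linearMap k A ∘ₗ f.ofConv)
  map_one' := by ext; simp
  map_mul' f g := congrArg toConv (LinearMap.algHom_comp_convMul_distrib (Algebra.ofId k A) f g)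

variable (k) in
def compCoalgHomConvHom {B : Type u} [AddCommGroup B] [Module k B] [Coalgebra k B]
    (A : Type u) [Ring A] [Algebra k A] (φ : B →ₗc[k] C) :
    WithConv (C →ₗ[k] A) →* WithConv (B →ₗ[k] A) where
  toFun f := toConv (f.ofConv ∘ₗ φ.toLinearMap)
  map_one' := by ext; simp
  map_mul' f g := congrArg toConv (LinearMap.convMul_comp_coalgHom_distrib f g φ)

end Convolution

section Bialgebra

variable (k : Type u) [CommRing k] (H : Type u) [Ring H] [Bialgebra k H]

def oneTmulCoalgHom : H →ₗc[k] H ⊗[k] H :=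
  ((Bialgebra.unitBialgHom k H).toCoalgHom.rTensor H).comp
    (Coalgebra.TensorProduct.lid k H).symm.toCoalgHom

def tmulOneCoalgHom : H →ₗc[k] H ⊗[k] H :=
  ((Bialgebra.unitBialgHom k H).toCoalgHom.lTensor H).comp
    (Coalgebra.TensorProduct.rid k k H).symm.toCoalgHom

@[simp] lemma oneTmulCoalgHom_apply (h : H) : oneTmulCoalgHom k H h = 1 ⊗ₜ h := by
  simp [oneTmulCoalgHom, BialgHom.toCoalgHom_apply]

@[simp] lemma tmulOneCoalgHom_apply (h : H) : tmulOneCoalgHom k H h = h ⊗ₜ 1 := by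
  simp [tmulOneCoalgHom, BialgHom.toCoalgHom_apply]

def normalizationHom :
    WithConv (H ⊗[k] H →ₗ[k] k) →* WithConv (H →ₗ[k] k) × WithConv (H →ₗ[k] k) :=
  (compCoalgHomConvHom k k (oneTmulCoalgHom k H)).prod
    (compCoalgHomConvHom k k (tmulOneCoalgHom k H))

variable {k H} in
lemma normalized_iff_normalizationHom_eq_one (σ : H ⊗[k] H →ₗ[k] k) :
    Normalized σ ↔ normalizationHom k H (toConv σ) = 1 := by
  simp [Normalized, normalizationHom, compCoalgHomConvHom, Prod.ext_iff, WithConv.ext_iff,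
    LinearMap.ext_iff, forall_and]

variable {k H} in
lemma isLazy2_iff_commute (σ : H ⊗[k] H →ₗ[k] k) :
    IsLazy2 σ ↔ Commute (algebraMapCompConvHom k (H ⊗[k] H) H (toConv σ)) (toConv mulH) := by
  have lid_map : (TensorProduct.lid k H).toLinearMap ∘ₗ TensorProduct.map σ mulH =
      LinearMap.mul' k H ∘ₗ TensorProduct.map (Algebra.linearMap k H ∘ₗ σ) mulH :=
    TensorProduct.ext' fun x y => by simp [Algebra.smul_def]
  have rid_map : (TensorProduct.rid k H).toLinearMap ∘ₗ TensorProduct.map mulH σ =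
      LinearMap.mul' k H ∘ₗ TensorProduct.map mulH (Algebra.linearMap k H ∘ₗ σ) :=
    TensorProduct.ext' fun x y => by simp [Algebra.smul_def, Algebra.commutes]
  rw [IsLazy2, ← LinearMap.comp_assoc, lid_map, ← LinearMap.comp_assoc, rid_map]
  exact toConv_injective.eq_iff.symm

def lazyReg2 : Subgroup (WithConv (H ⊗[k] H →ₗ[k] k))ˣ :=
  (Units.map (normalizationHom k H)).ker ⊓
    (algebraMapCompConvHom k (H ⊗[k] H) H).unitsCommuteWith (toConv mulH)

variable {k H} in
lemma reg2_and_isLazy2_iff (σ : H ⊗[k] H →ₗ[k] k) :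
    (Reg2 σ ∧ IsLazy2 σ) ↔ ∃ u ∈ lazyReg2 k H, (u : WithConv (H ⊗[k] H →ₗ[k] k)) = toConv σ := by
  simp only [lazyReg2, Subgroup.mem_inf, MonoidHom.mem_ker, MonoidHom.mem_unitsCommuteWith,
    Units.ext_iff, Units.coe_map, Units.val_one]
  constructor
  · rintro ⟨⟨hn, τ, hστ, hτσ⟩, hl⟩
    refine ⟨⟨toConv σ, toConv τ, ?_, ?_⟩,
      ⟨(normalized_iff_normalizationHom_eq_one σ).1 hn, (isLazy2_iff_commute σ).1 hl⟩, rfl⟩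
    · rw [← toConv_conv, hστ, toConv_counit]
    · rw [← toConv_conv, hτσ, toConv_counit]
  · rintro ⟨u, ⟨hn, hl⟩, hu⟩
    rw [hu] at hn hl
    refine ⟨⟨(normalized_iff_normalizationHom_eq_one σ).2 hn, ofConv ↑u⁻¹, ?_, ?_⟩,
      (isLazy2_iff_commute σ).2 hl⟩
    · rw [← toConv_injective.eq_iff, toConv_conv, ← hu, toConv_ofConv, Units.mul_inv,
        toConv_counit]
    · rw [← toConv_injective.eq_iff, toConv_conv, ← hu, toConv_ofConv, Units.inv_mul,
        toConv_counit]

end Bialgebra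

/-- The lazy elements of `Reg²(H)` form a subgroup of `Reg²(H)` under convolution. -/
theorem stmt4 {k : Type u} [Field k] {H : Type u} [Ring H] [Bialgebra k H] :
    (Reg2 (Coalgebra.counit : H ⊗[k] H →ₗ[k] k) ∧
      IsLazy2 (Coalgebra.counit : H ⊗[k] H →ₗ[k] k)) ∧
    (∀ σ τ : H ⊗[k] H →ₗ[k] k, Reg2 σ → IsLazy2 σ → Reg2 τ → IsLazy2 τ →
      Reg2 (conv σ τ) ∧ IsLazy2 (conv σ τ)) ∧
    (∀ σ τ : H ⊗[k] H →ₗ[k] k, Reg2 σ → IsLazy2 σ →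
      conv σ τ = (Coalgebra.counit : H ⊗[k] H →ₗ[k] k) →
      conv τ σ = (Coalgebra.counit : H ⊗[k] H →ₗ[k] k) → Reg2 τ ∧ IsLazy2 τ) := by
  refine ⟨(reg2_and_isLazy2_iff _).2 ⟨1, one_mem _, toConv_counit.symm⟩, ?_, ?_⟩
  · intro σ τ hσ hσL hτ hτL
    obtain ⟨u, hu, huσ⟩ := (reg2_and_isLazy2_iff σ).1 ⟨hσ, hσL⟩
    obtain ⟨v, hv, hvτ⟩ := (reg2_and_isLazy2_iff τ).1 ⟨hτ, hτL⟩
    refine (reg2_and_isLazy2_iff _).2 ⟨u * v, mul_mem hu hv, ?_⟩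
    rw [Units.val_mul, huσ, hvτ, toConv_conv]
  · intro σ τ hσ hσL hστ _
    obtain ⟨u, hu, huσ⟩ := (reg2_and_isLazy2_iff σ).1 ⟨hσ, hσL⟩
    refine (reg2_and_isLazy2_iff τ).2 ⟨u⁻¹, inv_mem hu, Units.inv_eq_of_mul_eq_one_right ?_⟩
    rw [huσ, ← toConv_conv, hστ, toConv_counit]
end
end

section
/- Let H be a Hopf algebra. Every normalized convolution-invertible lazy left 2-cocycle σ on H is also a right 2-cocycle, i.e. σ(a₁b₁,c)σ(a₂,b₂) = σ(a,b₁c₁)σ(b₂,c₂) for all a,b,c ∈ H. -/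
/-!
Laziness says that `σ` commutes with the multiplication in the convolution sense:
`σ(h₁,h'₁) h₂h'₂ = h₁h'₁ σ(h₂,h'₂)`. Feeding this into `σ(-, c)` turns the left-hand side
`σ(a₁,b₁)σ(a₂b₂,c)` of the left cocycle identity into the left-hand side `σ(a₁b₁,c)σ(a₂,b₂)` of
the right one, and feeding laziness for `(b, c)` into `σ(a, -)` does the same for the right-hand
sides.
-/

open TensorProduct

noncomputable section

universe u

section ConvolutionOnTensorProducts

open LinearMap (mul' id)

variable {k : Type u} [CommRing k] {A B C : Type u} {M : Type*}
  [AddCommGroup A] [Module k A] [Coalgebra k A] [AddCommGroup B] [Module k B] [Coalgebra k B]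
  [AddCommGroup C] [Module k C] [Coalgebra k C] [AddCommGroup M] [Module k M]

def lconv (F : A →ₗ[k] k) (m : A →ₗ[k] M) : A →ₗ[k] M :=
  (TensorProduct.lid k M).toLinearMap ∘ₗ map F m ∘ₗ Coalgebra.comul

def rconv (m : A →ₗ[k] M) (F : A →ₗ[k] k) : A →ₗ[k] M :=
  (TensorProduct.rid k M).toLinearMap ∘ₗ map m F ∘ₗ Coalgebra.comul

lemma conv_comp_assoc_symm (P Q : (A ⊗[k] B) ⊗[k] C →ₗ[k] k) :
    conv (P ∘ₗ (TensorProduct.assoc k A B C).symm.toLinearMap)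
      (Q ∘ₗ (TensorProduct.assoc k A B C).symm.toLinearMap)
    = conv P Q ∘ₗ (TensorProduct.assoc k A B C).symm.toLinearMap :=
  (LinearMap.convMul_comp_coalgHom_distrib (WithConv.toConv P) (WithConv.toConv Q)
    (Coalgebra.TensorProduct.assoc k k A B C).symm.toCoalgHom).symm

lemma conv_rid_counit_comp_map_left (F : A →ₗ[k] k) (m : A →ₗ[k] M) (G : M ⊗[k] B →ₗ[k] k) :
    conv (F ∘ₗ (TensorProduct.rid k A).toLinearMap ∘ₗ map id Coalgebra.counit) (G ∘ₗ map m id)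
    = G ∘ₗ map (lconv F m) id := by
  refine TensorProduct.ext' fun a b => ?_
  -- evaluated at `comul a ⊗ comul b`, the counit axiom `ε(b₁) b₂ = b` collapses the `B`-factor
  have key : mul' k k ∘ₗ
      map (F ∘ₗ (TensorProduct.rid k A).toLinearMap ∘ₗ map id Coalgebra.counit) (G ∘ₗ map m id) ∘ₗ
        (AlgebraTensorModule.tensorTensorTensorComm k k k k A A B B).toLinearMap
      = G ∘ₗ map ((TensorProduct.lid k M).toLinearMap ∘ₗ map F m)
          ((TensorProduct.lid k B).toLinearMap ∘ₗ LinearMap.rTensor B Coalgebra.counit) := by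
    ext
    simp [← smul_tmul', smul_smul]
  simpa [conv, lconv] using LinearMap.congr_fun key (Coalgebra.comul a ⊗ₜ Coalgebra.comul b)

lemma conv_comp_map_left_rid_counit (F : A →ₗ[k] k) (m : A →ₗ[k] M) (G : M ⊗[k] B →ₗ[k] k) :
    conv (G ∘ₗ map m id) (F ∘ₗ (TensorProduct.rid k A).toLinearMap ∘ₗ map id Coalgebra.counit)
    = G ∘ₗ map (rconv m F) id := by
  refine TensorProduct.ext' fun a b => ?_
  have key : mul' k k ∘ₗ
      map (G ∘ₗ map m id) (F ∘ₗ (TensorProduct.rid k A).toLinearMap ∘ₗ map id Coalgebra.counit) ∘ₗ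
        (AlgebraTensorModule.tensorTensorTensorComm k k k k A A B B).toLinearMap
      = G ∘ₗ map ((TensorProduct.rid k M).toLinearMap ∘ₗ map m F)
          ((TensorProduct.rid k B).toLinearMap ∘ₗ LinearMap.lTensor B Coalgebra.counit) := by
    ext
    simp [← smul_tmul', tmul_smul, smul_smul]
    ring
  simpa [conv, rconv] using LinearMap.congr_fun key (Coalgebra.comul a ⊗ₜ Coalgebra.comul b)

lemma conv_lid_counit_comp_map_right (F : B →ₗ[k] k) (m : B →ₗ[k] M) (G : A ⊗[k] M →ₗ[k] k) :
    conv (F ∘ₗ (TensorProduct.lid k B).toLinearMap ∘ₗ map Coalgebra.counit id) (G ∘ₗ map id m)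
    = G ∘ₗ map id (lconv F m) := by
  refine TensorProduct.ext' fun a b => ?_
  have key : mul' k k ∘ₗ
      map (F ∘ₗ (TensorProduct.lid k B).toLinearMap ∘ₗ map Coalgebra.counit id) (G ∘ₗ map id m) ∘ₗ
        (AlgebraTensorModule.tensorTensorTensorComm k k k k A A B B).toLinearMap
      = G ∘ₗ map ((TensorProduct.lid k A).toLinearMap ∘ₗ LinearMap.rTensor A Coalgebra.counit)
          ((TensorProduct.lid k M).toLinearMap ∘ₗ map F m) := by
    ext
    simp [← smul_tmul', tmul_smul, smul_smul]
    ring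
  simpa [conv, lconv] using LinearMap.congr_fun key (Coalgebra.comul a ⊗ₜ Coalgebra.comul b)

lemma conv_comp_map_right_lid_counit (F : B →ₗ[k] k) (m : B →ₗ[k] M) (G : A ⊗[k] M →ₗ[k] k) :
    conv (G ∘ₗ map id m) (F ∘ₗ (TensorProduct.lid k B).toLinearMap ∘ₗ map Coalgebra.counit id)
    = G ∘ₗ map id (rconv m F) := by
  refine TensorProduct.ext' fun a b => ?_
  have key : mul' k k ∘ₗ
      map (G ∘ₗ map id m) (F ∘ₗ (TensorProduct.lid k B).toLinearMap ∘ₗ map Coalgebra.counit id) ∘ₗ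
        (AlgebraTensorModule.tensorTensorTensorComm k k k k A A B B).toLinearMap
      = G ∘ₗ map ((TensorProduct.rid k A).toLinearMap ∘ₗ LinearMap.lTensor A Coalgebra.counit)
          ((TensorProduct.rid k M).toLinearMap ∘ₗ map m F) := by
    ext
    simp [← smul_tmul', tmul_smul, smul_smul]
    ring
  simpa [conv, rconv] using LinearMap.congr_fun key (Coalgebra.comul a ⊗ₜ Coalgebra.comul b)

end ConvolutionOnTensorProducts

section Bialgebra

open LinearMap (id)

variable {k : Type u} [CommRing k] {H : Type u} [Ring H] [Bialgebra k H]

lemma comp_map_id_pr1 (F : H ⊗[k] H →ₗ[k] k) :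
    F ∘ₗ map id pr1 = (F ∘ₗ (TensorProduct.rid k (H ⊗[k] H)).toLinearMap ∘ₗ
      map id Coalgebra.counit) ∘ₗ (TensorProduct.assoc k H H H).symm.toLinearMap := by
  ext
  simp [pr1]

lemma conv_comp_map_pr1_comp_map_mulH (F G : H ⊗[k] H →ₗ[k] k) :
    conv (F ∘ₗ map id pr1) (G ∘ₗ map mulH id ∘ₗ (TensorProduct.assoc k H H H).symm.toLinearMap)
    = G ∘ₗ map (lconv F mulH) id ∘ₗ (TensorProduct.assoc k H H H).symm.toLinearMap := by
  rw [comp_map_id_pr1, ← LinearMap.comp_assoc _ (map mulH id) G, conv_comp_assoc_symm,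
    conv_rid_counit_comp_map_left, LinearMap.comp_assoc]

lemma conv_comp_map_mulH_comp_map_pr1 (F G : H ⊗[k] H →ₗ[k] k) :
    conv (G ∘ₗ map mulH id ∘ₗ (TensorProduct.assoc k H H H).symm.toLinearMap) (F ∘ₗ map id pr1)
    = G ∘ₗ map (rconv mulH F) id ∘ₗ (TensorProduct.assoc k H H H).symm.toLinearMap := by
  rw [comp_map_id_pr1, ← LinearMap.comp_assoc _ (map mulH id) G, conv_comp_assoc_symm,
    conv_comp_map_left_rid_counit, LinearMap.comp_assoc]

theorem IsLazy2.lconv_eq_rconv {σ : H ⊗[k] H →ₗ[k] k} (h : IsLazy2 σ) :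
    lconv σ mulH = rconv mulH σ :=
  h

end Bialgebra

theorem stmt6_general {k : Type u} [Field k] {H : Type u} [Ring H] [HopfAlgebra k H]
    (σ : H ⊗[k] H →ₗ[k] k)
    (hlazy : IsLazy2 σ) (hcoc : IsLeftCocycle σ) :
    IsRightCocycle σ := by
  rw [IsRightCocycle, conv_comp_map_mulH_comp_map_pr1, ← hlazy.lconv_eq_rconv,
    ← conv_comp_map_pr1_comp_map_mulH, hcoc, dropL3, conv_lid_counit_comp_map_right,
    hlazy.lconv_eq_rconv, conv_comp_map_right_lid_counit]

/-- Every normalized convolution-invertible lazy left 2-cocycle on a Hopf algebra is also a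
right 2-cocycle. -/
theorem stmt6 {k : Type u} [Field k] {H : Type u} [Ring H] [HopfAlgebra k H]
    (σ τ : H ⊗[k] H →ₗ[k] k) (hnorm : Normalized σ)
    (hinv1 : conv σ τ = (Coalgebra.counit : H ⊗[k] H →ₗ[k] k))
    (hinv2 : conv τ σ = (Coalgebra.counit : H ⊗[k] H →ₗ[k] k))
    (hlazy : IsLazy2 σ) (hcoc : IsLeftCocycle σ) :
    IsRightCocycle σ :=
  stmt6_general σ hlazy hcoc

end
end

section
/- Let C be a strict monoidal category with a pure-braided structure (A, B) (two families of natural isomorphisms A_{U,V,W}, B_{U,V,W} : U⊗V⊗W → U⊗V⊗W satisfying the pure-braided axioms). Then A_{I,U,V} = A_{U,V,I} = id_{U⊗V} and B_{I,U,V} = B_{U,V,I} = id_{U⊗V} for all objects U, V. -/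
open CategoryTheory MonoidalCategory

universe v u

/-- A monoidal category is strict when the associators and unitors are `eqToHom`s of
equalities of objects. -/
structure MonStrict (C : Type u) [Category.{v} C] [MonoidalCategory C] : Prop where
  assocObj : ∀ X Y Z : C, (X ⊗ Y) ⊗ Z = X ⊗ (Y ⊗ Z)
  lidObj : ∀ X : C, 𝟙_ C ⊗ X = X
  ridObj : ∀ X : C, X ⊗ 𝟙_ C = X
  assocHom : ∀ X Y Z : C, (α_ X Y Z).hom = eqToHom (assocObj X Y Z)
  lidHom : ∀ X : C, (λ_ X).hom = eqToHom (lidObj X)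
  ridHom : ∀ X : C, (ρ_ X).hom = eqToHom (ridObj X)

variable {C : Type u} [Category.{v} C] [MonoidalCategory C]

/-- Transport of an endomorphism along an equality of objects of a strict monoidal
category. -/
def cE {X Y : C} (h : X = Y) (f : Y ⟶ Y) : X ⟶ X := eqToHom h ≫ f ≫ eqToHom h.symm

/-- A pure-braided structure on a strict monoidal category: two families of natural
isomorphisms `A, B : U ⊗ V ⊗ W ≅ U ⊗ V ⊗ W` satisfying the pure-braided axioms. -/
structure PureBraided (C : Type u) [Category.{v} C] [MonoidalCategory C]
    (hS : MonStrict C) where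
  A : ∀ U V W : C, U ⊗ (V ⊗ W) ≅ U ⊗ (V ⊗ W)
  B : ∀ U V W : C, U ⊗ (V ⊗ W) ≅ U ⊗ (V ⊗ W)
  natA : ∀ {U V W U' V' W' : C} (f : U ⟶ U') (g : V ⟶ V') (h : W ⟶ W'),
    (f ⊗ₘ (g ⊗ₘ h)) ≫ (A U' V' W').hom = (A U V W).hom ≫ (f ⊗ₘ (g ⊗ₘ h))
  natB : ∀ {U V W U' V' W' : C} (f : U ⟶ U') (g : V ⟶ V') (h : W ⟶ W'),
    (f ⊗ₘ (g ⊗ₘ h)) ≫ (B U' V' W').hom = (B U V W).hom ≫ (f ⊗ₘ (g ⊗ₘ h))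
  /-- `A_{U⊗V,W,X} = A_{U,V⊗W,X}(id_U ⊗ A_{V,W,X})` -/
  a1 : ∀ U V W X : C, (A (U ⊗ V) W X).hom =
    cE (by simp [hS.assocObj]) ((𝟙 U ⊗ₘ (A V W X).hom) ≫
      cE (by simp [hS.assocObj]) (A U (V ⊗ W) X).hom)
  /-- `A_{U,V,W⊗X} = (A_{U,V,W} ⊗ id_X) A_{U,V⊗W,X}` -/
  a2 : ∀ U V W X : C, (A U V (W ⊗ X)).hom =
    cE (by simp [hS.assocObj]) ((cE (by simp [hS.assocObj]) (A U (V ⊗ W) X).hom) ≫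
      ((A U V W).hom ⊗ₘ 𝟙 X))
  /-- `B_{U⊗V,W,X} = (id_U ⊗ B_{V,W,X}) B_{U,V⊗W,X}` -/
  baba : ∀ U V W X : C, (B (U ⊗ V) W X).hom =
    cE (by simp [hS.assocObj]) ((cE (by simp [hS.assocObj]) (B U (V ⊗ W) X).hom) ≫
      (𝟙 U ⊗ₘ (B V W X).hom))
  /-- `B_{U,V,W⊗X} = B_{U,V⊗W,X}(B_{U,V,W} ⊗ id_X)` -/
  b2 : ∀ U V W X : C, (B U V (W ⊗ X)).hom =
    cE (by simp [hS.assocObj]) (((B U V W).hom ⊗ₘ 𝟙 X) ≫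
      cE (by simp [hS.assocObj]) (B U (V ⊗ W) X).hom)
  /-- `(A_{U,V,W} ⊗ id_X)(id_U ⊗ B_{V,W,X}) = (id_U ⊗ B_{V,W,X})(A_{U,V,W} ⊗ id_X)` -/
  cab : ∀ U V W X : C,
    cE (by simp [hS.assocObj]) (𝟙 U ⊗ₘ (B V W X).hom) ≫ ((A U V W).hom ⊗ₘ 𝟙 X)
    = ((A U V W).hom ⊗ₘ 𝟙 X) ≫ cE (by simp [hS.assocObj]) (𝟙 U ⊗ₘ (B V W X).hom)
  /-- `A_{U,I,V} = B_{U,I,V}` -/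
  t1t : ∀ U V : C, A U (𝟙_ C) V = B U (𝟙_ C) V

/-- A twine on a strict monoidal category. -/
structure Twine (C : Type u) [Category.{v} C] [MonoidalCategory C]
    (hS : MonStrict C) where
  D : ∀ X Y : C, X ⊗ Y ≅ X ⊗ Y
  nat : ∀ {X Y X' Y' : C} (f : X ⟶ X') (g : Y ⟶ Y'),
    (f ⊗ₘ g) ≫ (D X' Y').hom = (D X Y).hom ≫ (f ⊗ₘ g)
  unit : (D (𝟙_ C) (𝟙_ C)).hom = 𝟙 (𝟙_ C ⊗ 𝟙_ C)
  /-- `(D_{X,Y} ⊗ id_Z) D_{X⊗Y,Z} = (id_X ⊗ D_{Y,Z}) D_{X,Y⊗Z}` -/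
  fus : ∀ X Y Z : C, (D (X ⊗ Y) Z).hom ≫ ((D X Y).hom ⊗ₘ 𝟙 Z)
    = cE (by simp [hS.assocObj]) ((D X (Y ⊗ Z)).hom ≫ (𝟙 X ⊗ₘ (D Y Z).hom))
  /-- the entwining axiom -/
  ent : ∀ X Y Z T : C,
    cE (by simp [hS.assocObj]) (𝟙 X ⊗ₘ (D Y (Z ⊗ T)).hom) ≫
      cE (by simp [hS.assocObj]) (𝟙 X ⊗ₘ ((D Y Z).inv ⊗ₘ 𝟙 T)) ≫
        ((D (X ⊗ Y) Z).hom ⊗ₘ 𝟙 T)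
    = ((D (X ⊗ Y) Z).hom ⊗ₘ 𝟙 T) ≫
        cE (by simp [hS.assocObj]) (𝟙 X ⊗ₘ ((D Y Z).inv ⊗ₘ 𝟙 T)) ≫
          cE (by simp [hS.assocObj]) (𝟙 X ⊗ₘ (D Y (Z ⊗ T)).hom)

/-- A strong twine on a strict monoidal category. -/
structure StrongTwine (C : Type u) [Category.{v} C] [MonoidalCategory C]
    (hS : MonStrict C) where
  D : ∀ X Y : C, X ⊗ Y ≅ X ⊗ Y
  nat : ∀ {X Y X' Y' : C} (f : X ⟶ X') (g : Y ⟶ Y'),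
    (f ⊗ₘ g) ≫ (D X' Y').hom = (D X Y).hom ≫ (f ⊗ₘ g)
  unit : (D (𝟙_ C) (𝟙_ C)).hom = 𝟙 (𝟙_ C ⊗ 𝟙_ C)
  /-- `(T_{U,V} ⊗ id_W) T_{U⊗V,W} = (id_U ⊗ T_{V,W}) T_{U,V⊗W}` -/
  fus : ∀ X Y Z : C, (D (X ⊗ Y) Z).hom ≫ ((D X Y).hom ⊗ₘ 𝟙 Z)
    = cE (by simp [hS.assocObj]) ((D X (Y ⊗ Z)).hom ≫ (𝟙 X ⊗ₘ (D Y Z).hom))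
  /-- `(T_{U,V} ⊗ id_W)(id_U ⊗ T_{V,W}) = (id_U ⊗ T_{V,W})(T_{U,V} ⊗ id_W)` -/
  comm : ∀ X Y Z : C,
    cE (by simp [hS.assocObj]) (𝟙 X ⊗ₘ (D Y Z).hom) ≫ ((D X Y).hom ⊗ₘ 𝟙 Z)
    = ((D X Y).hom ⊗ₘ 𝟙 Z) ≫ cE (by simp [hS.assocObj]) (𝟙 X ⊗ₘ (D Y Z).hom)

/-- A D-structure (consisting of isomorphisms) on a strict monoidal category. -/
structure DStructure (C : Type u) [Category.{v} C] [MonoidalCategory C]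
    (hS : MonStrict C) where
  R : ∀ X : C, X ≅ X
  nat : ∀ {X Y : C} (f : X ⟶ Y), f ≫ (R Y).hom = (R X).hom ≫ f
  unit : (R (𝟙_ C)).hom = 𝟙 (𝟙_ C)
  /-- `(R_{X⊗Y} ⊗ id_Z)(id_X ⊗ R_{Y⊗Z}) = (id_X ⊗ R_{Y⊗Z})(R_{X⊗Y} ⊗ id_Z)` -/
  comm : ∀ X Y Z : C,
    cE (by simp [hS.assocObj]) (𝟙 X ⊗ₘ (R (Y ⊗ Z)).hom) ≫ ((R (X ⊗ Y)).hom ⊗ₘ 𝟙 Z)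
    = ((R (X ⊗ Y)).hom ⊗ₘ 𝟙 Z) ≫ cE (by simp [hS.assocObj]) (𝟙 X ⊗ₘ (R (Y ⊗ Z)).hom)

/-! In a strict monoidal category `𝟙_ C ⊗ 𝟙_ C = 𝟙_ C` and tensoring with `𝟙 (𝟙_ C)` does
nothing, so each of the four tensor axioms, instantiated with two unit objects, says that
`A_{I,U,V}`, `A_{U,V,I}`, `B_{I,U,V}` or `B_{U,V,I}` is idempotent. An idempotent isomorphism
is the identity. -/

section

variable {K D : Type*} [Category K]

lemma eq_cE_of_eq {G : D → K} (F : ∀ d, G d ⟶ G d) {d d' : D} (h : d = d') :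
    F d = cE (congrArg G h) (F d') := by
  subst h; simp [cE]

lemma cE_eq_cE_iff {X Y Z : K} (h : X = Y) (h' : X = Z) (f : Y ⟶ Y) (g : Z ⟶ Z) :
    cE h f = cE h' g ↔ f = cE (h.symm.trans h') g := by
  subst h h'; simp [cE]

@[simp]
lemma cE_comp {X Y : K} (h : X = Y) (f g : Y ⟶ Y) : cE h (f ≫ g) = cE h f ≫ cE h g := by
  subst h; simp [cE]

@[simp]
lemma cE_cE {X Y Z : K} (h : X = Y) (h' : Y = Z) (f : Z ⟶ Z) :
    cE h (cE h' f) = cE (h.trans h') f := by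
  subst h h'; simp [cE]

@[simp]
lemma cE_self {X : K} (h : X = X) (f : X ⟶ X) : cE h f = f := by
  simp [cE]

lemma CategoryTheory.Iso.hom_eq_id_of_hom_comp_hom {X : K} (e : X ≅ X)
    (h : e.hom ≫ e.hom = e.hom) : e.hom = 𝟙 X :=
  (cancel_mono e.hom).1 (h.trans (Category.id_comp _).symm)

end

namespace MonStrict

variable (hS : MonStrict C)

lemma id_unit_tensorHom {X : C} (f : X ⟶ X) : 𝟙 (𝟙_ C) ⊗ₘ f = cE (hS.lidObj X) f := by
  have h := leftUnitor_naturality f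
  rw [hS.lidHom, ← cancel_mono (eqToHom (hS.lidObj X))] at *
  simpa [cE] using h

lemma tensorHom_id_unit {X : C} (f : X ⟶ X) : f ⊗ₘ 𝟙 (𝟙_ C) = cE (hS.ridObj X) f := by
  have h := rightUnitor_naturality f
  rw [hS.ridHom, ← cancel_mono (eqToHom (hS.ridObj X))] at *
  simpa [cE] using h

end MonStrict

namespace PureBraided

variable {hS : MonStrict C} (P : PureBraided C hS)

lemma A_unit_left (U V : C) : (P.A (𝟙_ C) U V).hom = 𝟙 _ := by
  have h := P.a1 (𝟙_ C) (𝟙_ C) U V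
  rw [eq_cE_of_eq (fun W => (P.A W U V).hom) (hS.lidObj (𝟙_ C)),
    eq_cE_of_eq (fun W => (P.A (𝟙_ C) W V).hom) (hS.lidObj U), hS.id_unit_tensorHom,
    cE_eq_cE_iff] at h
  simp only [cE_comp, cE_cE, cE_self] at h
  exact (P.A _ U V).hom_eq_id_of_hom_comp_hom h.symm

lemma A_unit_right (U V : C) : (P.A U V (𝟙_ C)).hom = 𝟙 _ := by
  have h := P.a2 U V (𝟙_ C) (𝟙_ C)
  rw [eq_cE_of_eq (fun W => (P.A U V W).hom) (hS.ridObj (𝟙_ C)),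
    eq_cE_of_eq (fun W => (P.A U W (𝟙_ C)).hom) (hS.ridObj V), hS.tensorHom_id_unit,
    cE_eq_cE_iff] at h
  simp only [cE_comp, cE_cE, cE_self] at h
  exact (P.A U V _).hom_eq_id_of_hom_comp_hom h.symm

lemma B_unit_left (U V : C) : (P.B (𝟙_ C) U V).hom = 𝟙 _ := by
  have h := P.baba (𝟙_ C) (𝟙_ C) U V
  rw [eq_cE_of_eq (fun W => (P.B W U V).hom) (hS.lidObj (𝟙_ C)),
    eq_cE_of_eq (fun W => (P.B (𝟙_ C) W V).hom) (hS.lidObj U), hS.id_unit_tensorHom,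
    cE_eq_cE_iff] at h
  simp only [cE_comp, cE_cE, cE_self] at h
  exact (P.B _ U V).hom_eq_id_of_hom_comp_hom h.symm

lemma B_unit_right (U V : C) : (P.B U V (𝟙_ C)).hom = 𝟙 _ := by
  have h := P.b2 U V (𝟙_ C) (𝟙_ C)
  rw [eq_cE_of_eq (fun W => (P.B U V W).hom) (hS.ridObj (𝟙_ C)),
    eq_cE_of_eq (fun W => (P.B U W (𝟙_ C)).hom) (hS.ridObj V), hS.tensorHom_id_unit,
    cE_eq_cE_iff] at h
  simp only [cE_comp, cE_cE, cE_self] at h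
  exact (P.B U V _).hom_eq_id_of_hom_comp_hom h.symm

end PureBraided

/-- In a pure-braided strict monoidal category, `A_{I,U,V} = A_{U,V,I} = id` and
`B_{I,U,V} = B_{U,V,I} = id`. -/
theorem stmt7 (hS : MonStrict C) (P : PureBraided C hS) (U V : C) :
    (P.A (𝟙_ C) U V).hom = 𝟙 (𝟙_ C ⊗ (U ⊗ V)) ∧
    (P.A U V (𝟙_ C)).hom = 𝟙 (U ⊗ (V ⊗ 𝟙_ C)) ∧
    (P.B (𝟙_ C) U V).hom = 𝟙 (𝟙_ C ⊗ (U ⊗ V)) ∧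
    (P.B U V (𝟙_ C)).hom = 𝟙 (U ⊗ (V ⊗ 𝟙_ C)) :=
  ⟨P.A_unit_left U V, P.A_unit_right U V, P.B_unit_left U V, P.B_unit_right U V⟩
end
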